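/- Let k be a positive integer, s ≥ 3 an integer, and λ an integer with 0 < λ < 2^s. Write λ = 2^r·λ' with 0 ≤ r < s and λ' odd, and suppose r is odd and s − r > 1. Then ρ_{k,λ}(2^s) = (Σ_{i=0}^{(r−3)/2} 2^{ki + (s−2i−3)(k−1)}) · (ρ_{k,0}(8) − 2^{2k−1}) + 2^{k(r−1)/2 + (s−r−2)(k−1)} · ρ_{k, 2λ' mod 8}(8), where the sum is empty when r = 1. -/

import Mathlib

/-!
Call a solution of `∑ xᵢ² = λ` in `(ℤ/2^sℤ)^k` primitive if some `xᵢ` is odd, and let `P_s(λ)`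
count these. A non-primitive solution is `x = 2u`; for `s ≥ 2` this forces `4 ∣ λ`, and then there
are `2^k ρ_{k,λ/4}(2^(s-2))` of them. Primitive solutions lift uniformly: for `s ≥ 2` the primitive
`x` mod `2^(s+2)` with `∑ xᵢ² ≡ λ (mod 2^(s+1))` number `2^k P_{s+1}(λ)`, their sums of squares are
`λ` or `λ + 2^(s+1)`, and adding `2^s` to an odd coordinate swaps the two cases. Hence
`P_{s+2}(λ) = 2^(k-1) P_{s+1}(λ)`, so `P_s(λ) = 2^((s-3)(k-1)) P_3(λ mod 8)`. Peeling factors `4`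
off `λ = 2^r λ'` down to `2λ'`, where only primitive solutions exist, gives the formula, with
`P_3(0) = ρ_{k,0}(8) - 2^k ρ_{k,0}(2)`.
-/

/-- `rho k lam n` is the number of `k`-tuples `(x₁,…,x_k) ∈ (ℤ/nℤ)^k` with
`x₁² + ⋯ + x_k² ≡ lam (mod n)`. -/
noncomputable def rho (k : ℕ) (lam : ℤ) (n : ℕ) : ℕ :=
  Nat.card {x : Fin k → ZMod n // ∑ i, x i ^ 2 = (lam : ZMod n)}

open Function

theorem AddMonoidHom.card_fiber_mul_card {G H : Type*} [AddGroup G] [AddGroup H] (f : G →+ H)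
    (hf : Surjective f) (b : H) : Nat.card {a // f a = b} * Nat.card H = Nat.card G := by
  have e : {a // f a = b} ≃ f.ker := f.fiberEquivKerOfSurjective hf b
  rw [Nat.card_congr e, ← AddSubgroup.card_top (G := H), ← f.range_eq_top_of_surjective hf,
    ← AddSubgroup.index_ker]
  exact f.ker.card_mul_index

theorem Nat.card_subtype_eq_mul_of_fibers {α β : Type*} [Finite α] [Finite β] (f : α → β)
    {p : α → Prop} {q : β → Prop} (hpq : ∀ a, p a ↔ q (f a)) {c : ℕ}
    (hc : ∀ b, q b → Nat.card {a // f a = b} = c) :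
    Nat.card {a // p a} = c * Nat.card {b // q b} := by
  have : Fintype {b // q b} := Fintype.ofFinite _
  rw [← Nat.card_congr (Equiv.sigmaSubtypeFiberEquivSubtype f hpq), Nat.card_sigma,
    Finset.sum_congr rfl fun b _ => hc b.1 b.2, Finset.sum_const, Finset.card_univ,
    smul_eq_mul, Nat.card_eq_fintype_card, mul_comm]

theorem Nat.card_subtype_eq_card_and_add_card_and_not {α : Type*} [Finite α] (p q : α → Prop) :
    Nat.card {a // p a} = Nat.card {a // p a ∧ q a} + Nat.card {a // p a ∧ ¬q a} := by
  classical
  have : Disjoint (fun a => p a ∧ q a) (fun a => p a ∧ ¬q a) :=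
    Pi.disjoint_iff.2 fun a => Prop.disjoint_iff.2 fun ⟨⟨_, h⟩, _, h'⟩ => h' h
  rw [← Nat.card_sum, ← Nat.card_congr (subtypeOrEquiv _ _ this)]
  exact Nat.card_congr (Equiv.subtypeEquivRight fun a => by tauto)

theorem Finset.sum_sq_add_pi_single {ι R : Type*} [Fintype ι] [DecidableEq ι] [CommRing R]
    (x : ι → R) (i : ι) (d : R) :
    ∑ l, (x + Pi.single i d : ι → R) l ^ 2 = ∑ l, x l ^ 2 + (2 * x i + d) * d := by
  simp only [Pi.add_apply, add_sq, Finset.sum_add_distrib, Pi.single_apply]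
  simp only [mul_ite, mul_zero, ite_pow, ne_eq, OfNat.ofNat_ne_zero, not_false_eq_true,
    zero_pow, Finset.sum_ite_eq', Finset.mem_univ, if_true]
  ring

theorem ZMod.natCast_mul_eq_zero_iff {m n N : ℕ} [NeZero N] (h : m * n = N) (z : ZMod N) :
    (n : ZMod N) * z = 0 ↔ ZMod.castHom (Dvd.intro n h) (ZMod m) z = 0 := by
  have hn : n ≠ 0 := right_ne_zero_of_mul (h ▸ NeZero.ne N)
  rw [ZMod.castHom_apply, ZMod.cast_eq_val, ZMod.natCast_eq_zero_iff, ← ZMod.natCast_zmod_val z,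
    ← Nat.cast_mul, ZMod.natCast_zmod_val, ZMod.natCast_eq_zero_iff]
  generalize z.val = v
  rw [← h, mul_comm m, Nat.mul_dvd_mul_iff_left (Nat.pos_of_ne_zero hn)]

theorem ZMod.card_fiber_castHom_comp {m d n : ℕ} [NeZero n] (h : m * d = n) (k : ℕ)
    (b : Fin k → ZMod m) :
    Nat.card {x : Fin k → ZMod n // ZMod.castHom (Dvd.intro d h) (ZMod m) ∘ x = b} = d ^ k := by
  have hm : m ≠ 0 := left_ne_zero_of_mul (h ▸ NeZero.ne n)
  let π := ZMod.castHom (Dvd.intro d h) (ZMod m)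
  have := (π.compLeft (Fin k)).toAddMonoidHom.card_fiber_mul_card
    (ZMod.ringHom_surjective π).comp_left b
  rw [Nat.card_fun, Nat.card_fun, Nat.card_zmod, Nat.card_zmod, Nat.card_fin] at this
  refine Nat.eq_of_mul_eq_mul_left (pow_pos (Nat.pos_of_ne_zero hm) k) ?_
  rw [← mul_pow, h, ← this, mul_comm]
  rfl

theorem ZMod.castHom_two_pow_succ_eq_iff {m : ℕ} (a b : ZMod (2 ^ (m + 1))) :
    ZMod.castHom (pow_dvd_pow 2 m.le_succ) (ZMod (2 ^ m)) a =
        ZMod.castHom (pow_dvd_pow 2 m.le_succ) (ZMod (2 ^ m)) b ↔ a = b ∨ a = b + 2 ^ m := by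
  rw [← sub_eq_zero, ← map_sub, ← sub_eq_zero (a := a), ← sub_eq_iff_eq_add' (a := a)]
  generalize a - b = z
  constructor
  · rw [ZMod.castHom_apply, ZMod.cast_eq_val, ZMod.natCast_eq_zero_iff]
    rintro ⟨q, hq⟩
    have : q < 2 := by
      have := z.val_lt; rw [hq, pow_succ] at this; exact Nat.lt_of_mul_lt_mul_left this
    rw [← ZMod.natCast_zmod_val z, hq]
    interval_cases q <;> simp
  · rintro (rfl | rfl)
    · exact map_zero _
    · rw [map_pow, map_ofNat]
      exact_mod_cast ZMod.natCast_self _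

theorem ZMod.not_odd_iff_even {n : ℕ} (hn : 2 ∣ n) (a : ZMod n) : ¬Odd a ↔ Even a := by
  obtain ⟨b, rfl⟩ := ZMod.intCast_surjective a
  refine ⟨fun h => (Int.not_odd_iff_even.1 fun hb => h (hb.map (Int.castRingHom _))).map
    (Int.castRingHom _), fun ⟨c, hc⟩ ⟨d, hd⟩ => ?_⟩
  have parity_mod_two : ∀ u v : ZMod 2, u + u ≠ 2 * v + 1 := by decide
  refine parity_mod_two (ZMod.castHom hn (ZMod 2) c) (ZMod.castHom hn (ZMod 2) d) ?_
  simpa only [map_add, map_mul, map_one, map_ofNat] using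
    congrArg (ZMod.castHom hn (ZMod 2)) (hc.symm.trans hd)

theorem ZMod.odd_castHom_iff {m n : ℕ} (h : m ∣ n) (hm : 2 ∣ m) (a : ZMod n) :
    Odd (ZMod.castHom h (ZMod m) a) ↔ Odd a := by
  refine ⟨fun ha => ?_, fun ha => ha.map _⟩
  by_contra h'
  exact (ZMod.not_odd_iff_even hm _).2 (((ZMod.not_odd_iff_even (hm.trans h) a).1 h').map _) ha

theorem ZMod.two_mul_add_two_pow_mul_two_pow {s : ℕ} (hs : 2 ≤ s) {a : ZMod (2 ^ (s + 2))}
    (ha : Odd a) : (2 * a + 2 ^ s) * 2 ^ s = 2 ^ (s + 1) := by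
  obtain ⟨t, rfl⟩ := ha
  obtain ⟨u, rfl⟩ := Nat.exists_eq_add_of_le' hs
  have h0 : (2 : ZMod (2 ^ (u + 2 + 2))) ^ (u + 2 + 2) = 0 := by
    exact_mod_cast ZMod.natCast_self _
  linear_combination (t + 2 ^ u) * h0

noncomputable def primRho (k : ℕ) (lam : ℤ) (n : ℕ) : ℕ :=
  Nat.card {x : Fin k → ZMod n // ∑ i, x i ^ 2 = (lam : ZMod n) ∧ ∃ i, Odd (x i)}

theorem primRho_congr {k n : ℕ} {lam lam' : ℤ} (h : lam ≡ lam' [ZMOD n]) :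
    primRho k lam n = primRho k lam' n := by
  rw [primRho, primRho, (ZMod.intCast_eq_intCast_iff _ _ _).2 h]

theorem primRho_le_primRho_add_two_pow {k s : ℕ} (hk : 0 < k) (hs : 2 ≤ s) (lam : ℤ) :
    primRho k lam (2 ^ (s + 2)) ≤ primRho k (lam + 2 ^ (s + 1)) (2 ^ (s + 2)) := by
  have : Nonempty (Fin k) := ⟨⟨0, hk⟩⟩
  have hev (i l : Fin k) : Even ((Pi.single i (2 ^ s) : Fin k → ZMod (2 ^ (s + 2))) l) := by
    rw [Pi.single_apply]; split_ifs
    exacts [even_two.pow_of_ne_zero (by omega), Even.zero]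
  -- `j x` depends only on which coordinates of `x` are odd, and `τ` does not change that
  let j (x : Fin k → ZMod (2 ^ (s + 2))) : Fin k := Classical.epsilon fun i => Odd (x i)
  let τ (x : Fin k → ZMod (2 ^ (s + 2))) := x + Pi.single (j x) (2 ^ s)
  have hodd (x) (l) : Odd (τ x l) ↔ Odd (x l) :=
    ⟨fun h => by simpa [τ] using h.sub_even (hev (j x) l), fun h => h.add_even (hev (j x) l)⟩
  have hj (x) : j (τ x) = j x := by
    simp only [j, funext fun l => propext (hodd x l)]
  have hτ : Injective τ := fun x y hxy => by
    have : j x = j y := by rw [← hj x, ← hj y, hxy]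
    simpa [τ, this] using hxy
  refine Nat.card_le_card_of_injective (fun x => ⟨τ x.1, ?_, ?_⟩)
    fun x y h => Subtype.ext (hτ (congrArg Subtype.val h))
  · have hx := Classical.epsilon_spec x.2.2
    rw [Finset.sum_sq_add_pi_single, x.2.1, ZMod.two_mul_add_two_pow_mul_two_pow hs hx]
    push_cast
    rfl
  · obtain ⟨i, hi⟩ := x.2.2
    exact ⟨i, (hodd x.1 i).2 hi⟩

theorem two_mul_primRho_two_pow_add_two {k s : ℕ} (hk : 0 < k) (hs : 2 ≤ s) (lam : ℤ) :
    2 * primRho k lam (2 ^ (s + 2)) = 2 ^ k * primRho k lam (2 ^ (s + 1)) := by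
  set π := ZMod.castHom (pow_dvd_pow 2 (s + 1).le_succ) (ZMod (2 ^ (s + 1)))
  have hshift : primRho k (lam + 2 ^ (s + 1)) (2 ^ (s + 2)) = primRho k lam (2 ^ (s + 2)) := by
    refine le_antisymm ?_ (primRho_le_primRho_add_two_pow hk hs lam)
    refine (primRho_le_primRho_add_two_pow hk hs _).trans_eq (primRho_congr ?_)
    exact Int.modEq_iff_dvd.2 ⟨-1, by push_cast; ring⟩
  have hdisj : Disjoint (fun x : Fin k → ZMod (2 ^ (s + 2)) => ∑ i, x i ^ 2 = lam ∧ ∃ i, Odd (x i))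
      (fun x => ∑ i, x i ^ 2 = ((lam + 2 ^ (s + 1) : ℤ) : ZMod _) ∧ ∃ i, Odd (x i)) := by
    have h0 : (2 ^ (s + 1) : ZMod (2 ^ (s + 2))) ≠ 0 := by
      exact_mod_cast mt (ZMod.natCast_eq_zero_iff _ _).1
        (mt (Nat.pow_dvd_pow_iff_le_right one_lt_two).1 (by omega))
    refine Pi.disjoint_iff.2 fun x => Prop.disjoint_iff.2 fun ⟨⟨h₁, _⟩, h₂, _⟩ => h0 ?_
    push_cast at h₂
    rw [h₁] at h₂
    simpa using h₂
  classical
  calc 2 * primRho k lam (2 ^ (s + 2))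
      = primRho k lam (2 ^ (s + 2)) + primRho k (lam + 2 ^ (s + 1)) (2 ^ (s + 2)) := by
        rw [hshift, two_mul]
    _ = Nat.card {x : Fin k → ZMod (2 ^ (s + 2)) //
          (∑ i, x i ^ 2 = lam ∧ ∃ i, Odd (x i)) ∨
            (∑ i, x i ^ 2 = ((lam + 2 ^ (s + 1) : ℤ) : ZMod _) ∧ ∃ i, Odd (x i))} := by
        rw [Nat.card_congr (subtypeOrEquiv _ _ hdisj), Nat.card_sum, primRho, primRho]
    _ = 2 ^ k * primRho k lam (2 ^ (s + 1)) := by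
        refine Nat.card_subtype_eq_mul_of_fibers (π ∘ ·) (fun x => ?_)
          fun b _ => ZMod.card_fiber_castHom_comp (pow_succ 2 (s + 1)) k b
        simp only [π, comp_apply, ← map_pow, ← map_sum]
        rw [← map_intCast π, ZMod.castHom_two_pow_succ_eq_iff]
        simp only [ZMod.odd_castHom_iff _ (dvd_pow_self 2 (Nat.succ_ne_zero s))]
        push_cast
        tauto

theorem primRho_two_pow_succ {k s : ℕ} (hk : 0 < k) (hs : 3 ≤ s) (lam : ℤ) :
    primRho k lam (2 ^ (s + 1)) = 2 ^ (k - 1) * primRho k lam (2 ^ s) := by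
  obtain ⟨u, rfl⟩ := Nat.exists_eq_add_of_le' (show 1 ≤ s by omega)
  have h := two_mul_primRho_two_pow_add_two hk (show 2 ≤ u by omega) lam
  rw [← Nat.two_pow_pred_mul_two hk, mul_comm _ 2, mul_assoc] at h
  exact Nat.eq_of_mul_eq_mul_left two_pos h

theorem primRho_two_pow {k s : ℕ} (hk : 0 < k) (hs : 3 ≤ s) (lam : ℤ) :
    primRho k lam (2 ^ s) = 2 ^ ((s - 3) * (k - 1)) * primRho k lam 8 := by
  induction s, hs using Nat.le_induction with
  | base => simp
  | succ s hs ih =>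
    rw [primRho_two_pow_succ hk hs, ih, ← mul_assoc, ← pow_add]
    congr 2
    rw [Nat.sub_add_comm hs, Nat.succ_mul, add_comm]

theorem rho_eq_primRho_add {k n : ℕ} [NeZero n] (hn : 2 ∣ n) (lam : ℤ) :
    rho k lam n = primRho k lam n +
      Nat.card {x : Fin k → ZMod n // ∑ i, x i ^ 2 = lam ∧ ∀ i, Even (x i)} := by
  rw [rho, Nat.card_subtype_eq_card_and_add_card_and_not _
    fun x : Fin k → ZMod n => ∃ i, Odd (x i)]
  simp only [not_exists, ZMod.not_odd_iff_even hn]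
  rfl

theorem card_even_sum_sq_eq_four_mul (k t : ℕ) (mu : ℤ) :
    Nat.card {x : Fin k → ZMod (2 ^ (t + 2)) //
      ∑ i, x i ^ 2 = ((4 * mu : ℤ) : ZMod _) ∧ ∀ i, Even (x i)} = 2 ^ k * rho k mu (2 ^ t) := by
  have h4 : 2 ^ t * 4 = 2 ^ (t + 2) := by ring
  have h2 : 2 ^ (t + 1) * 2 = 2 ^ (t + 2) := by ring
  -- count the `u` with `∑ (u i mod 2^t)² = mu` by reducing mod `2^t`, and through `u ↦ 2u`
  set π := ZMod.castHom (Dvd.intro 4 h4) (ZMod (2 ^ t))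
  let D := AddMonoidHom.mulLeft (2 : Fin k → ZMod (2 ^ (t + 2)))
  have card_by_reduction : Nat.card {u : Fin k → ZMod (2 ^ (t + 2)) // ∑ i, π (u i) ^ 2 = mu} =
      4 ^ k * rho k mu (2 ^ t) :=
    Nat.card_subtype_eq_mul_of_fibers (π ∘ ·) (q := fun w => ∑ i, w i ^ 2 = (mu : ZMod (2 ^ t)))
      (fun _ => Iff.rfl)
      fun b _ => ZMod.card_fiber_castHom_comp h4 k b
  have hD (b : Fin k → ZMod (2 ^ (t + 2))) (hb : ∀ i, Even (b i)) :
      Nat.card {u // D u = b} = 2 ^ k := by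
    choose a ha using hb
    obtain rfl : b = D a := funext fun i => by simp [D, ha i, two_mul]
    rw [show Nat.card {u // D u = D a} = Nat.card D.ker from Nat.card_congr (D.fiberEquivKer a),
      ← ZMod.card_fiber_castHom_comp h2 k 0]
    refine Nat.card_congr (Equiv.subtypeEquivRight fun u => ?_)
    have := ZMod.natCast_mul_eq_zero_iff h2
    simp only [Nat.cast_ofNat] at this
    simp [D, funext_iff, this]
  have card_by_doubling : Nat.card {u : Fin k → ZMod (2 ^ (t + 2)) // ∑ i, π (u i) ^ 2 = mu} =
      2 ^ k * Nat.card {x : Fin k → ZMod (2 ^ (t + 2)) //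
        ∑ i, x i ^ 2 = ((4 * mu : ℤ) : ZMod _) ∧ ∀ i, Even (x i)} := by
    refine Nat.card_subtype_eq_mul_of_fibers D (fun u => ?_) fun b hb => hD b hb.2
    have := ZMod.natCast_mul_eq_zero_iff h4 (∑ i, u i ^ 2 - mu)
    simp only [Nat.cast_ofNat, map_sub, map_sum, map_pow, map_intCast, sub_eq_zero, mul_sub] at this
    simp only [D, AddMonoidHom.coe_mulLeft, Pi.mul_apply, Pi.ofNat_apply, even_two_mul,
      implies_true, and_true, mul_pow, ← Finset.mul_sum]
    norm_num
    exact this.symm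
  rw [card_by_reduction, show 4 ^ k = 2 ^ k * 2 ^ k by rw [← mul_pow]; rfl, mul_assoc]
    at card_by_doubling
  exact (Nat.eq_of_mul_eq_mul_left (by positivity) card_by_doubling).symm

theorem rho_four_mul (k t : ℕ) (mu : ℤ) :
    rho k (4 * mu) (2 ^ (t + 2)) = primRho k (4 * mu) (2 ^ (t + 2)) + 2 ^ k * rho k mu (2 ^ t) := by
  rw [rho_eq_primRho_add (dvd_pow_self 2 (by omega)), card_even_sum_sq_eq_four_mul]

theorem rho_eq_primRho_of_emod_four_eq_two {k s : ℕ} (hs : 2 ≤ s) {lam : ℤ} (h : lam % 4 = 2) :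
    rho k lam (2 ^ s) = primRho k lam (2 ^ s) := by
  rw [rho_eq_primRho_add (dvd_pow_self 2 (by omega)), add_eq_left, Nat.card_eq_zero]
  refine Or.inl ⟨fun ⟨x, hx, hev⟩ => ?_⟩
  choose u hu using hev
  have h4 : ((2 ^ 2 : ℕ) : ℤ) ∣ lam := by
    rw [← ZMod.intCast_zmod_eq_zero_iff_dvd,
      ← map_intCast (ZMod.castHom (pow_dvd_pow 2 hs) (ZMod (2 ^ 2))), ← hx]
    simp only [hu, ← two_mul, mul_pow, ← Finset.mul_sum, map_mul, map_pow, map_ofNat]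
    rw [show (2 : ZMod (2 ^ 2)) ^ 2 = 0 by decide, zero_mul]
  norm_num at h4
  omega

theorem rho_zero_two {k : ℕ} (hk : 0 < k) : rho k 0 2 = 2 ^ (k - 1) := by
  let f := ∑ i, Pi.evalAddMonoidHom (fun _ : Fin k => ZMod 2) i
  have hf : Surjective f := fun c => ⟨Pi.single ⟨0, hk⟩ c, by simp [f]⟩
  have := f.card_fiber_mul_card hf 0
  rw [Nat.card_fun, Nat.card_zmod, Nat.card_fin, ← Nat.two_pow_pred_mul_two hk] at this
  rw [← Nat.eq_of_mul_eq_mul_right two_pos this, rho]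
  refine Nat.card_congr (Equiv.subtypeEquivRight fun x => ?_)
  simp [f, ZMod.pow_card]

theorem primRho_zero_eight {k : ℕ} (hk : 0 < k) : primRho k 0 8 = rho k 0 8 - 2 ^ (2 * k - 1) := by
  have h := rho_four_mul k 1 0
  rw [mul_zero, pow_one, rho_zero_two hk, ← pow_add, show k + (k - 1) = 2 * k - 1 by omega] at h
  norm_num at h
  omega

theorem rho_two_pow_odd_mul {k : ℕ} (hk : 0 < k) {lam' : ℤ} (hodd : Odd lam') (m s : ℕ)
    (hs : 2 * m + 3 ≤ s) :
    rho k (2 ^ (2 * m + 1) * lam') (2 ^ s) =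
      (∑ i ∈ Finset.range m, 2 ^ (k * i + (s - 2 * i - 3) * (k - 1))) * primRho k 0 8 +
        2 ^ (k * m + (s - 2 * m - 3) * (k - 1)) * primRho k (2 * lam') 8 := by
  induction m generalizing s with
  | zero =>
    obtain ⟨c, rfl⟩ := hodd
    rw [rho_eq_primRho_of_emod_four_eq_two (by omega) (by omega), primRho_two_pow hk (by omega)]
    simp
  | succ m ih =>
    obtain ⟨t, rfl⟩ := Nat.exists_eq_add_of_le' (show 2 ≤ s by omega)
    have h8 : 4 * (2 ^ (2 * m + 1) * lam') ≡ 0 [ZMOD 8] :=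
      Int.modEq_zero_iff_dvd.2 ⟨2 ^ (2 * m) * lam', by ring⟩
    rw [show 2 ^ (2 * (m + 1) + 1) * lam' = 4 * (2 ^ (2 * m + 1) * lam') by ring, rho_four_mul,
      primRho_two_pow hk (by omega), primRho_congr h8, ih t (by omega), Finset.sum_range_succ']
    have e (i : ℕ) : k * (i + 1) + (t + 2 - 2 * (i + 1) - 3) * (k - 1) =
        k + (k * i + (t - 2 * i - 3) * (k - 1)) := by
      rw [show t + 2 - 2 * (i + 1) - 3 = t - 2 * i - 3 by omega]; ring
    simp only [e, pow_add _ k, ← Finset.mul_sum, mul_zero, zero_add, Nat.sub_zero]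
    ring

theorem rho_two_pow_r_odd_general (k : ℕ) (hk : 0 < k) (s : ℕ) (lam : ℤ)
    (r : ℕ) (lam' : ℤ) (hfac : lam = 2 ^ r * lam') (hodd : Odd lam')
    (hrodd : Odd r) (hsr : 1 < s - r) :
    rho k lam (2 ^ s) =
      (∑ i ∈ Finset.range ((r - 1) / 2), 2 ^ (k * i + (s - 2 * i - 3) * (k - 1))) *
        (rho k 0 8 - 2 ^ (2 * k - 1))
      + 2 ^ (k * ((r - 1) / 2) + (s - r - 2) * (k - 1)) * rho k ((2 * lam') % 8) 8 := by
  obtain ⟨m, rfl⟩ := hrodd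
  have h8 : rho k (2 * lam' % 8) (2 ^ 3) = primRho k (2 * lam') 8 := by
    obtain ⟨c, rfl⟩ := hodd
    rw [rho_eq_primRho_of_emod_four_eq_two (by norm_num : 2 ≤ 3) (by omega)]
    exact primRho_congr (Int.mod_modEq _ _)
  rw [hfac, rho_two_pow_odd_mul hk hodd m s (by omega), ← primRho_zero_eight hk, ← h8,
    show (2 * m + 1 - 1) / 2 = m by omega, show s - (2 * m + 1) - 2 = s - 2 * m - 3 by omega]
  rfl

/-- For `λ = 2^r·λ'` with `λ'` odd, `r` odd and `s − r > 1`: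
`ρ_{k,λ}(2^s) = (Σ_{i=0}^{(r−3)/2} 2^{ki+(s−2i−3)(k−1)}) · (ρ_{k,0}(8) − 2^{2k−1})
+ 2^{k(r−1)/2+(s−r−2)(k−1)} · ρ_{k,2λ' mod 8}(8)` (the sum is empty when `r = 1`). -/
theorem rho_two_pow_r_odd (k : ℕ) (hk : 0 < k) (s : ℕ) (hs : 3 ≤ s)
    (lam : ℤ) (hlam0 : 0 < lam) (hlam1 : lam < 2 ^ s)
    (r : ℕ) (lam' : ℤ) (hr : r < s) (hfac : lam = 2 ^ r * lam') (hodd : Odd lam')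
    (hrodd : Odd r) (hsr : 1 < s - r) :
    rho k lam (2 ^ s) =
      (∑ i ∈ Finset.range ((r - 1) / 2), 2 ^ (k * i + (s - 2 * i - 3) * (k - 1))) *
        (rho k 0 8 - 2 ^ (2 * k - 1))
      + 2 ^ (k * ((r - 1) / 2) + (s - r - 2) * (k - 1)) * rho k ((2 * lam') % 8) 8 :=
  rho_two_pow_r_odd_general k hk s lam r lam' hfac hodd hrodd hsr
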